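/- For all reals κ′, κ with 1/2 < κ′ < κ < 1 there exists a constant C ≥ 1 (depending only on κ′ and κ) such that the following holds: for every η ∈ (0, 1/2] and all positive integers d, w, n with d ≤ w and n ≥ C·w/η, there exists a coupling of X ~ Binomial(n, 2κ′η) and Y ~ Binomial(n, κη) (a joint probability distribution on ℕ × ℕ with these two marginals) under which Pr[X/2 + w ≤ Y] ≥ 1 − e^{−d}. (That is, the distribution (1/2)·Binomial(n, 2κ′η) + w is (1 − e^{−d})-stochastically dominated by Binomial(n, κη).) -/

import Mathlib

/-!
Take `X ~ Binomial(n, 2κ'η)` and `Y ~ Binomial(n, κη)` independent and write `δ = κ - κ'`,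
`m = ηn`. The events `X < 2κ'm + δm/2` and `Y > κm - δm/4` together force `X/2 + w ≤ Y` as soon as
`2w ≤ δm`. The Chernoff bound `P(S) ≤ exp(np(s + s²) - a)`, valid whenever `a ≤ s·j` on `S` and
`|s| ≤ 1`, applied with `s = ±δ/8`, shows that each event fails with probability at most
`exp(-δ²m/64)`. With `C = 128/δ²` we have `m ≥ 128w/δ²`, and the union bound leaves failure
probability at most `2exp(-2w) ≤ exp(-d)`.
-/

open scoped ENNReal

/-- The `Binomial(n, p)` probability of the outcome `j`. -/
noncomputable def binomProb (n : ℕ) (p : ℝ) (j : ℕ) : ℝ≥0∞ :=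
  (n.choose j : ℝ≥0∞) * ENNReal.ofReal p ^ j * ENNReal.ofReal (1 - p) ^ (n - j)

open Real Finset MeasureTheory

theorem PMF.one_sub_add_le_toOuterMeasure {α β : Type*} (ν : PMF (α × β)) {S : Set α}
    {T : Set β} {U : Set (α × β)} (hU : ∀ x y, x ∉ S → y ∉ T → (x, y) ∈ U) :
    1 - ((ν.map Prod.fst).toOuterMeasure S + (ν.map Prod.snd).toOuterMeasure T) ≤
      ν.toOuterMeasure U := by
  have hcover : Set.univ ⊆ U ∪ Prod.fst ⁻¹' S ∪ Prod.snd ⁻¹' T := by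
    rintro ⟨x, y⟩ -
    by_cases hx : x ∈ S
    · exact .inl (.inr hx)
    by_cases hy : y ∈ T
    · exact .inr hy
    exact .inl (.inl (hU x y hx hy))
  rw [tsub_le_iff_right, PMF.toOuterMeasure_map_apply, PMF.toOuterMeasure_map_apply, ← add_assoc,
    ← (ν.toOuterMeasure_apply_eq_one_iff Set.univ).2 (Set.subset_univ _)]
  exact (measure_mono hcover).trans
    ((measure_union_le _ _).trans (by gcongr; exact measure_union_le _ _))

theorem binomProb_eq_ofReal {p : ℝ} (hp0 : 0 ≤ p) (hp1 : p ≤ 1) (n j : ℕ) :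
    binomProb n p j = ENNReal.ofReal (n.choose j * p ^ j * (1 - p) ^ (n - j)) := by
  have : 0 ≤ 1 - p := by linarith
  rw [binomProb, ENNReal.ofReal_mul (by positivity), ENNReal.ofReal_mul (by positivity),
    ENNReal.ofReal_pow hp0, ENNReal.ofReal_pow this, ENNReal.ofReal_natCast]

theorem binomProb_of_lt {n j : ℕ} (p : ℝ) (h : n < j) : binomProb n p j = 0 := by
  simp [binomProb, Nat.choose_eq_zero_of_lt h]

theorem sum_binomProb {p : ℝ} (hp0 : 0 ≤ p) (hp1 : p ≤ 1) (n : ℕ) :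
    ∑ j ∈ range (n + 1), binomProb n p j = 1 := by
  have hsum : ENNReal.ofReal p + ENNReal.ofReal (1 - p) = 1 := by
    rw [← ENNReal.ofReal_add hp0 (by linarith), add_sub_cancel, ENNReal.ofReal_one]
  calc ∑ j ∈ range (n + 1), binomProb n p j
      = (ENNReal.ofReal p + ENNReal.ofReal (1 - p)) ^ n := by
        rw [add_pow]
        exact sum_congr rfl fun j _ => by rw [binomProb]; ring
    _ = 1 := by rw [hsum, one_pow]

noncomputable def binomPMF (n : ℕ) {p : ℝ} (hp0 : 0 ≤ p) (hp1 : p ≤ 1) : PMF ℕ :=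
  PMF.ofFinset (binomProb n p) (range (n + 1)) (sum_binomProb hp0 hp1 n)
    fun _ hj => binomProb_of_lt p (by simpa using hj)

@[simp]
theorem binomPMF_apply (n : ℕ) {p : ℝ} (hp0 : 0 ≤ p) (hp1 : p ≤ 1) (j : ℕ) :
    binomPMF n hp0 hp1 j = binomProb n p j := rfl

theorem PMF.map_fst_bind_map_prodMk {α β : Type*} (P : PMF α) (Q : PMF β) :
    (P.bind fun a => Q.map (Prod.mk a)).map Prod.fst = P := by
  simp only [PMF.map_bind, PMF.map_comp]
  exact (congrArg P.bind (funext fun a => Q.map_const a)).trans P.bind_pure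

theorem PMF.map_snd_bind_map_prodMk {α β : Type*} (P : PMF α) (Q : PMF β) :
    (P.bind fun a => Q.map (Prod.mk a)).map Prod.snd = Q := by
  simp only [PMF.map_bind, PMF.map_comp]
  exact (congrArg P.bind (funext fun a => Q.map_id)).trans (P.bind_const Q)

theorem sum_choose_mul_pow_mul_exp (n : ℕ) (p s : ℝ) :
    ∑ j ∈ range (n + 1), n.choose j * p ^ j * (1 - p) ^ (n - j) * exp (s * j) =
      (p * exp s + (1 - p)) ^ n := by
  rw [add_pow]
  refine sum_congr rfl fun j _ => ?_
  rw [mul_comm s, exp_nat_mul]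
  ring

theorem pow_mul_exp_add_one_sub_le_exp {p : ℝ} (hp0 : 0 ≤ p) (hp1 : p ≤ 1) (n : ℕ) {s : ℝ}
    (hs : |s| ≤ 1) : (p * exp s + (1 - p)) ^ n ≤ exp (n * p * (s + s ^ 2)) := by
  have hexp : exp s - 1 ≤ s + s ^ 2 := by linarith [(abs_le.1 (abs_exp_sub_one_sub_id_le hs)).2]
  have hbase : p * exp s + (1 - p) ≤ exp (p * (s + s ^ 2)) :=
    calc p * exp s + (1 - p) = p * (exp s - 1) + 1 := by ring
      _ ≤ p * (s + s ^ 2) + 1 := by gcongr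
      _ ≤ exp (p * (s + s ^ 2)) := by linarith [add_one_le_exp (p * (s + s ^ 2))]
  calc (p * exp s + (1 - p)) ^ n ≤ exp (p * (s + s ^ 2)) ^ n :=
        pow_le_pow_left₀ (by have := exp_pos s; nlinarith) hbase n
    _ = exp (n * p * (s + s ^ 2)) := by rw [← exp_nat_mul, mul_assoc]

theorem binomPMF_toOuterMeasure_le_exp {p : ℝ} (hp0 : 0 ≤ p) (hp1 : p ≤ 1) (n : ℕ) {s a : ℝ}
    (hs : |s| ≤ 1) {S : Set ℕ} (hS : ∀ j ∈ S, a ≤ s * j) :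
    (binomPMF n hp0 hp1).toOuterMeasure S ≤ ENNReal.ofReal (exp (n * p * (s + s ^ 2) - a)) := by
  have hq : 0 ≤ 1 - p := by linarith
  calc (binomPMF n hp0 hp1).toOuterMeasure S
      ≤ ∑' j, binomProb n p j * ENNReal.ofReal (exp (s * j - a)) := by
        rw [PMF.toOuterMeasure_apply]
        refine ENNReal.tsum_le_tsum fun j => ?_
        by_cases hj : j ∈ S
        · rw [Set.indicator_of_mem hj, binomPMF_apply]
          exact le_mul_of_one_le_right' (ENNReal.one_le_ofReal.2
            (one_le_exp (by linarith [hS j hj])))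
        · simp [hj]
    _ = ∑ j ∈ range (n + 1), binomProb n p j * ENNReal.ofReal (exp (s * j - a)) :=
        tsum_eq_sum fun j hj => by rw [binomProb_of_lt p (by simpa using hj), zero_mul]
    _ = ENNReal.ofReal (exp (-a) * (p * exp s + (1 - p)) ^ n) := by
        rw [← sum_choose_mul_pow_mul_exp, mul_sum, ENNReal.ofReal_sum_of_nonneg
          fun j _ => by positivity]
        refine sum_congr rfl fun j _ => ?_
        rw [binomProb_eq_ofReal hp0 hp1, ← ENNReal.ofReal_mul (by positivity),
          show s * j - a = -a + s * j by ring, exp_add]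
        ring_nf
    _ ≤ ENNReal.ofReal (exp (n * p * (s + s ^ 2) - a)) := by
        rw [sub_eq_neg_add (_ * _), exp_add]
        gcongr
        exact pow_mul_exp_add_one_sub_le_exp hp0 hp1 n hs

theorem binomPMF_upper_tail_le {p : ℝ} (hp0 : 0 ≤ p) (hp1 : p ≤ 1) (n : ℕ) {t : ℝ}
    (ht0 : 0 ≤ t) (ht1 : t ≤ 1) (Δ : ℝ) :
    (binomPMF n hp0 hp1).toOuterMeasure {j | n * p + Δ ≤ j} ≤
      ENNReal.ofReal (exp (n * p * t ^ 2 - t * Δ)) := by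
  refine (binomPMF_toOuterMeasure_le_exp hp0 hp1 n (a := t * (n * p + Δ))
    (by rwa [abs_of_nonneg ht0]) fun j hj => mul_le_mul_of_nonneg_left hj ht0).trans_eq ?_
  congr 2
  ring

theorem binomPMF_lower_tail_le {p : ℝ} (hp0 : 0 ≤ p) (hp1 : p ≤ 1) (n : ℕ) {t : ℝ}
    (ht0 : 0 ≤ t) (ht1 : t ≤ 1) (Δ : ℝ) :
    (binomPMF n hp0 hp1).toOuterMeasure {j | j ≤ n * p - Δ} ≤
      ENNReal.ofReal (exp (n * p * t ^ 2 - t * Δ)) := by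
  refine (binomPMF_toOuterMeasure_le_exp hp0 hp1 n (a := -t * (n * p - Δ))
    (by rwa [abs_neg, abs_of_nonneg ht0])
    fun j hj => mul_le_mul_of_nonpos_left hj (neg_nonpos.2 ht0)).trans_eq ?_
  congr 2
  ring

theorem exists_coupling_half_add_le (P Q : PMF ℕ) {A B w : ℝ} (hAB : A / 2 + w ≤ B) :
    ∃ ν : PMF (ℕ × ℕ), ν.map Prod.fst = P ∧ ν.map Prod.snd = Q ∧
      1 - (P.toOuterMeasure {j | A ≤ j} + Q.toOuterMeasure {j | j ≤ B}) ≤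
        ν.toOuterMeasure {p : ℕ × ℕ | (p.1 : ℝ) / 2 + w ≤ p.2} := by
  set ν := P.bind fun a => Q.map (Prod.mk a)
  have hfst : ν.map Prod.fst = P := PMF.map_fst_bind_map_prodMk P Q
  have hsnd : ν.map Prod.snd = Q := PMF.map_snd_bind_map_prodMk P Q
  refine ⟨ν, hfst, hsnd, ?_⟩
  rw [← hfst, ← hsnd]
  refine PMF.one_sub_add_le_toOuterMeasure ν fun x y hx hy => ?_
  simp only [Set.mem_ofPred_eq, not_le] at hx hy ⊢
  linarith

theorem ENNReal.ofReal_one_sub_le_one_sub_add {a b : ℝ≥0∞} {ε x : ℝ} (hε : 0 ≤ ε)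
    (ha : a ≤ ENNReal.ofReal ε) (hb : b ≤ ENNReal.ofReal ε) (hx : 2 * ε ≤ x) :
    ENNReal.ofReal (1 - x) ≤ 1 - (a + b) := by
  rw [ENNReal.ofReal_sub _ (by linarith), ENNReal.ofReal_one]
  gcongr
  calc a + b ≤ ENNReal.ofReal ε + ENNReal.ofReal ε := add_le_add ha hb
    _ = ENNReal.ofReal (2 * ε) := by rw [← ENNReal.ofReal_add hε hε, two_mul]
    _ ≤ ENNReal.ofReal x := ENNReal.ofReal_le_ofReal hx

theorem two_mul_exp_neg_le {x d : ℝ} (h : d + 1 ≤ x) : 2 * exp (-x) ≤ exp (-d) :=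
  calc 2 * exp (-x) ≤ exp 1 * exp (-(d + 1)) := by
        gcongr
        linarith [add_one_le_exp 1]
    _ = exp (-d) := by rw [← exp_add]; ring_nf

/-- For all `1/2 < κ' < κ < 1` there is a constant `C ≥ 1` such that
for all `η ∈ (0, 1/2]` and all positive integers `d ≤ w` and `n ≥ C·w/η`, there is a
coupling `ν` of `X ~ Binomial(n, 2κ'η)` and `Y ~ Binomial(n, κη)` under which
`Pr[X/2 + w ≤ Y] ≥ 1 − e^{−d}`; that is, `(1/2)·Binomial(n, 2κ'η) + w` is
`(1 − e^{−d})`-stochastically dominated by `Binomial(n, κη)`. -/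
theorem half_binomial_plus_w_dominated
    (κ' κ : ℝ) (h1 : 1 / 2 < κ') (h2 : κ' < κ) (h3 : κ < 1) :
    ∃ C : ℝ, 1 ≤ C ∧
      ∀ (η : ℝ), 0 < η → η ≤ 1 / 2 →
      ∀ (d w n : ℕ), 0 < d → 0 < w → 0 < n → d ≤ w → C * w / η ≤ n →
      ∃ ν : PMF (ℕ × ℕ),
        (∀ a : ℕ, ν.map Prod.fst a = binomProb n (2 * κ' * η) a) ∧
        (∀ b : ℕ, ν.map Prod.snd b = binomProb n (κ * η) b) ∧
        ENNReal.ofReal (1 - Real.exp (-(d : ℝ))) ≤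
          ν.toOuterMeasure {p : ℕ × ℕ | (p.1 : ℝ) / 2 + (w : ℝ) ≤ (p.2 : ℝ)} := by
  set δ := κ - κ'
  have hδ : 0 < δ := by linarith
  refine ⟨128 / δ ^ 2, by rw [le_div_iff₀ (by positivity)]; nlinarith, ?_⟩
  intro η hη hη2 d w n _ hw _ hdw hCn
  have hp0 : 0 ≤ 2 * κ' * η := by positivity
  have hp1 : 2 * κ' * η ≤ 1 := by nlinarith
  have hq0 : 0 ≤ κ * η := by nlinarith
  have hq1 : κ * η ≤ 1 := by nlinarith
  set m := η * n with hm_def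
  have hnp : (n : ℝ) * (2 * κ' * η) = 2 * κ' * m := by rw [hm_def]; ring
  have hnq : (n : ℝ) * (κ * η) = κ * m := by rw [hm_def]; ring
  have hm : 128 * w ≤ δ ^ 2 * m := by
    rw [div_mul_eq_mul_div, div_div, div_le_iff₀ (by positivity)] at hCn
    linarith
  have hw1 : (1 : ℝ) ≤ w := by exact_mod_cast hw
  have hdw' : (d : ℝ) ≤ w := by exact_mod_cast hdw
  obtain ⟨ν, hfst, hsnd, hν⟩ := exists_coupling_half_add_le (binomPMF n hp0 hp1)
    (binomPMF n hq0 hq1) (A := n * (2 * κ' * η) + δ * m / 2) (B := n * (κ * η) - δ * m / 4)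
    (w := w) (by rw [hnp, hnq]; nlinarith)
  refine ⟨ν, by simp [hfst], by simp [hsnd], hν.trans' ?_⟩
  refine ENNReal.ofReal_one_sub_le_one_sub_add (exp_nonneg _) ?_ ?_
    (two_mul_exp_neg_le (x := δ ^ 2 * m / 64) (by linarith))
  · refine (binomPMF_upper_tail_le hp0 hp1 n (t := δ / 8) (by positivity) (by linarith) _).trans
      (ENNReal.ofReal_le_ofReal (exp_le_exp.2 ?_))
    rw [hnp]
    nlinarith
  · refine (binomPMF_lower_tail_le hq0 hq1 n (t := δ / 8) (by positivity) (by linarith) _).trans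
      (ENNReal.ofReal_le_ofReal (exp_le_exp.2 ?_))
    rw [hnq]
    nlinarith
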